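/- arXiv:1405.6437 — 2 statements merged into one kernel-verified Lean document; each statement's English description precedes it below -/
import Mathlib

section
/- Tensor product via concatenation: with π₁, π₂ as above and c ∈ ℝ, set c₁ = log(e^{c+φ(π₁)} + e^{ε(π₂)}) - log(e^{φ(π₁)} + e^{ε(π₂)}) and c₂ = c - c₁. Then e^c · (π₁ * π₂) = (e^{c₁} · π₁) * (e^{c₂} · π₂) as paths on [0, T+S]. -/
open MeasureTheory

/-- `ε(π) = log ∫₀ᴸ e^{-π(s)} ds` for a path on `[0,L]`. -/
noncomputable def eps (L : ℝ) (p : ℝ → ℝ) : ℝ :=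
  Real.log (∫ s in (0:ℝ)..L, Real.exp (-p s))

/-- The geometric root operator `(e^c · π)(t)` for a path on `[0,L]`. -/
noncomputable def rootOp (L c : ℝ) (p : ℝ → ℝ) : ℝ → ℝ := fun t =>
  p t + Real.log (1 + (Real.exp c - 1) * Real.exp (-(eps L p)) *
    ∫ s in (0:ℝ)..t, Real.exp (-p s))

/-- Concatenation of paths. -/
noncomputable def concat (T : ℝ) (p q : ℝ → ℝ) : ℝ → ℝ := fun t =>
  if t ≤ T then p t else p T + q (t - T)

/-! Writing `F = cumulativeWeight L p` for the normalised cumulative mass of `e^{-p}`, the root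
operator is `p t + log (1 + (e^c - 1) F t)`. For the concatenation, `F` equals `θ F₁` on `[0, T]`
and `θ + (1 - θ) F₂ (· - T)` on `[T, T + S]`, where `θ` is the mass fraction of the first piece;
the formula for `c₁` says exactly `e^{c₁} = 1 + (e^c - 1) θ`. Then
`1 + (e^c - 1) θ x = 1 + (e^{c₁} - 1) x` and
`1 + (e^c - 1) (θ + (1 - θ) y) = e^{c₁} (1 + (e^{c₂} - 1) y)`, and the logarithm of the latter
splits off the value `c₁` that the first piece reaches at its endpoint. -/

open Set intervalIntegral

noncomputable def cumulativeWeight (L : ℝ) (p : ℝ → ℝ) (t : ℝ) : ℝ :=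
  (∫ s in (0:ℝ)..t, Real.exp (-p s)) / ∫ s in (0:ℝ)..L, Real.exp (-p s)

section Weights

variable {L T S c t : ℝ} {p q : ℝ → ℝ}

theorem intervalIntegrable_exp_neg (hL : 0 ≤ L) (hp : ContinuousOn p (Icc 0 L)) :
    IntervalIntegrable (fun s => Real.exp (-p s)) volume 0 L :=
  (Real.continuous_exp.comp_continuousOn hp.neg).intervalIntegrable_of_Icc hL

theorem integral_exp_neg_pos (hL : 0 < L) (hp : ContinuousOn p (Icc 0 L)) :
    0 < ∫ s in (0:ℝ)..L, Real.exp (-p s) :=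
  intervalIntegral_pos_of_pos_on (intervalIntegrable_exp_neg hL.le hp)
    (fun _ _ => Real.exp_pos _) hL

theorem rootOp_eq_add_log_cumulativeWeight (hZ : 0 < ∫ s in (0:ℝ)..L, Real.exp (-p s))
    (t : ℝ) :
    rootOp L c p t = p t + Real.log (1 + (Real.exp c - 1) * cumulativeWeight L p t) := by
  rw [rootOp, cumulativeWeight, eps, Real.exp_neg, Real.exp_log hZ, mul_assoc, inv_mul_eq_div]

theorem rootOp_self (hZ : 0 < ∫ s in (0:ℝ)..L, Real.exp (-p s)) : rootOp L c p L = p L + c := by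
  rw [rootOp_eq_add_log_cumulativeWeight hZ, cumulativeWeight, div_self hZ.ne', mul_one,
    add_sub_cancel, Real.log_exp]

theorem cumulativeWeight_mem_Icc (hp : IntervalIntegrable (fun s => Real.exp (-p s)) volume 0 L)
    (ht : t ∈ Icc 0 L) : cumulativeWeight L p t ∈ Icc 0 1 := by
  have hpos : ∀ s, 0 ≤ Real.exp (-p s) := fun s => (Real.exp_pos _).le
  have hZ : 0 ≤ ∫ s in (0:ℝ)..L, Real.exp (-p s) :=
    integral_nonneg (ht.1.trans ht.2) fun s _ => hpos s
  have hmono : (∫ s in (0:ℝ)..t, Real.exp (-p s)) ≤ ∫ s in (0:ℝ)..L, Real.exp (-p s) :=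
    integral_mono_interval le_rfl ht.1 ht.2 (Filter.Eventually.of_forall hpos) hp
  exact ⟨div_nonneg (integral_nonneg ht.1 fun s _ => hpos s) hZ, div_le_one_of_le₀ hmono hZ⟩

theorem integral_exp_neg_concat_of_mem_Icc (ht : t ∈ Icc 0 T) :
    (∫ s in (0:ℝ)..t, Real.exp (-concat T p q s)) = ∫ s in (0:ℝ)..t, Real.exp (-p s) := by
  refine integral_congr fun s hs => ?_
  rw [uIcc_of_le ht.1] at hs
  rw [concat, if_pos (hs.2.trans ht.2)]

theorem integral_exp_neg_concat_of_le (hT : 0 ≤ T) (hTt : T ≤ t)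
    (hp : IntervalIntegrable (fun s => Real.exp (-p s)) volume 0 T)
    (hq : IntervalIntegrable (fun s => Real.exp (-q s)) volume 0 (t - T)) :
    (∫ s in (0:ℝ)..t, Real.exp (-concat T p q s)) =
      (∫ s in (0:ℝ)..T, Real.exp (-p s)) +
        Real.exp (-p T) * ∫ s in (0:ℝ)..(t - T), Real.exp (-q s) := by
  have hleft : EqOn (fun s => Real.exp (-concat T p q s)) (fun s => Real.exp (-p s)) (uIcc 0 T) :=
    fun s hs => by rw [uIcc_of_le hT] at hs; simp only [concat, if_pos hs.2]
  have hright : EqOn (fun s => Real.exp (-p T) * Real.exp (-q (s - T)))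
      (fun s => Real.exp (-concat T p q s)) (uIoo T t) := fun s hs => by
    rw [uIoo_of_le hTt] at hs
    simp only [concat, if_neg (not_le.mpr hs.1), neg_add, Real.exp_add]
  have hshift :
      IntervalIntegrable (fun s => Real.exp (-p T) * Real.exp (-q (s - T))) volume T t := by
    simpa using (hq.comp_sub_right T).const_mul (Real.exp (-p T))
  have hp' := (intervalIntegrable_congr (hleft.mono uIoc_subset_uIcc)).mpr hp
  rw [← integral_add_adjacent_intervals hp' (hshift.congr_uIoo hright), integral_congr hleft,
    ← integral_congr_uIoo hright, intervalIntegral.integral_const_mul,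
    integral_comp_sub_right (fun s => Real.exp (-q s)), sub_self]

theorem integral_exp_neg_concat (hT : 0 ≤ T) (hS : 0 ≤ S)
    (hp : IntervalIntegrable (fun s => Real.exp (-p s)) volume 0 T)
    (hq : IntervalIntegrable (fun s => Real.exp (-q s)) volume 0 S) :
    (∫ s in (0:ℝ)..(T + S), Real.exp (-concat T p q s)) =
      (∫ s in (0:ℝ)..T, Real.exp (-p s)) +
        Real.exp (-p T) * ∫ s in (0:ℝ)..S, Real.exp (-q s) := by
  have h := integral_exp_neg_concat_of_le (t := T + S) hT (le_add_of_nonneg_right hS) hp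
    (by rwa [add_sub_cancel_left])
  rwa [add_sub_cancel_left] at h

theorem cumulativeWeight_concat_of_mem_Icc (hA : (∫ s in (0:ℝ)..T, Real.exp (-p s)) ≠ 0)
    (ht : t ∈ Icc 0 T) :
    cumulativeWeight L (concat T p q) t =
      cumulativeWeight L (concat T p q) T * cumulativeWeight T p t := by
  simp only [cumulativeWeight, integral_exp_neg_concat_of_mem_Icc ht,
    integral_exp_neg_concat_of_mem_Icc (right_mem_Icc.mpr (ht.1.trans ht.2))]
  field_simp

theorem cumulativeWeight_concat_of_le (hT : 0 ≤ T) (hTt : T ≤ t) (htS : t ≤ T + S)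
    (hp : IntervalIntegrable (fun s => Real.exp (-p s)) volume 0 T)
    (hq : IntervalIntegrable (fun s => Real.exp (-q s)) volume 0 S)
    (hA : 0 < ∫ s in (0:ℝ)..T, Real.exp (-p s)) (hB : 0 < ∫ s in (0:ℝ)..S, Real.exp (-q s)) :
    cumulativeWeight (T + S) (concat T p q) t =
      cumulativeWeight (T + S) (concat T p q) T +
        (1 - cumulativeWeight (T + S) (concat T p q) T) * cumulativeWeight S q (t - T) := by
  have hqt : IntervalIntegrable (fun s => Real.exp (-q s)) volume 0 (t - T) :=
    hq.mono_set (uIcc_subset_uIcc_left (by rw [uIcc_of_le (by linarith)]; constructor <;> linarith))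
  have hZ := integral_exp_neg_concat hT (by linarith) hp hq
  have hZpos : 0 < (∫ s in (0:ℝ)..T, Real.exp (-p s)) +
      Real.exp (-p T) * ∫ s in (0:ℝ)..S, Real.exp (-q s) := by positivity
  simp only [cumulativeWeight, integral_exp_neg_concat_of_mem_Icc (right_mem_Icc.mpr hT),
    integral_exp_neg_concat_of_le hT hTt hp hqt, hZ]
  field_simp
  ring

theorem cumulativeWeight_concat_self (hT : 0 ≤ T) (hS : 0 ≤ S)
    (hp : IntervalIntegrable (fun s => Real.exp (-p s)) volume 0 T)
    (hq : IntervalIntegrable (fun s => Real.exp (-q s)) volume 0 S)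
    (hA : 0 < ∫ s in (0:ℝ)..T, Real.exp (-p s)) (hB : 0 < ∫ s in (0:ℝ)..S, Real.exp (-q s)) :
    cumulativeWeight (T + S) (concat T p q) T =
      Real.exp (p T + eps T p) / (Real.exp (p T + eps T p) + Real.exp (eps S q)) := by
  rw [cumulativeWeight, integral_exp_neg_concat_of_mem_Icc (right_mem_Icc.mpr hT),
    integral_exp_neg_concat hT hS hp hq, Real.exp_add, eps, eps, Real.exp_log hA, Real.exp_log hB,
    Real.exp_neg]
  field_simp

end Weights

theorem exp_log_exp_mul_add_sub_log_add {x y : ℝ} (c : ℝ) (hx : 0 < x) (hy : 0 < y) :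
    Real.exp (Real.log (Real.exp c * x + y) - Real.log (x + y)) =
      1 + (Real.exp c - 1) * (x / (x + y)) := by
  rw [Real.exp_sub, Real.exp_log (by positivity), Real.exp_log (by positivity)]
  field_simp
  ring

theorem one_add_sub_one_mul_pos {k y : ℝ} (hk : 0 < k) (hy : y ∈ Icc 0 1) :
    0 < 1 + (k - 1) * y := by
  rcases hy.1.eq_or_lt with rfl | hy0
  · simp
  · nlinarith [mul_pos hk hy0, hy.2]

theorem stmt_6_general (T S c : ℝ) (hT : 0 < T) (hS : 0 < S) (p q : ℝ → ℝ)
    (hp : ContinuousOn p (Set.Icc 0 T)) (hq : ContinuousOn q (Set.Icc 0 S))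
    (c₁ c₂ : ℝ)
    (hc₁ : c₁ = Real.log (Real.exp (c + (p T + eps T p)) + Real.exp (eps S q)) -
        Real.log (Real.exp (p T + eps T p) + Real.exp (eps S q)))
    (hc₂ : c₂ = c - c₁) :
    ∀ t ∈ Set.Icc (0:ℝ) (T + S),
      rootOp (T + S) c (concat T p q) t =
        concat T (rootOp T c₁ p) (rootOp S c₂ q) t := by
  intro t ht
  have hpi := intervalIntegrable_exp_neg hT.le hp
  have hqi := intervalIntegrable_exp_neg hS.le hq
  have hA := integral_exp_neg_pos hT hp
  have hB := integral_exp_neg_pos hS hq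
  have hZ : 0 < ∫ s in (0:ℝ)..(T + S), Real.exp (-concat T p q s) := by
    rw [integral_exp_neg_concat hT.le hS.le hpi hqi]
    positivity
  have hθ : Real.exp c₁ = 1 + (Real.exp c - 1) * cumulativeWeight (T + S) (concat T p q) T := by
    rw [hc₁, Real.exp_add c, exp_log_exp_mul_add_sub_log_add c (Real.exp_pos _) (Real.exp_pos _),
      cumulativeWeight_concat_self hT.le hS.le hpi hqi hA hB]
  rw [rootOp_eq_add_log_cumulativeWeight hZ]
  rcases le_or_gt t T with htT | hTt
  · rw [concat, if_pos htT, concat, if_pos htT, rootOp_eq_add_log_cumulativeWeight hA,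
      cumulativeWeight_concat_of_mem_Icc hA.ne' ⟨ht.1, htT⟩, hθ]
    ring_nf
  · have hy := cumulativeWeight_mem_Icc hqi (t := t - T) ⟨by linarith, by linarith [ht.2]⟩
    have hsplit : 1 + (Real.exp c - 1) * (cumulativeWeight (T + S) (concat T p q) T +
          (1 - cumulativeWeight (T + S) (concat T p q) T) * cumulativeWeight S q (t - T)) =
        Real.exp c₁ * (1 + (Real.exp c₂ - 1) * cumulativeWeight S q (t - T)) := by
      rw [hc₂, Real.exp_sub]
      field_simp
      rw [hθ]
      ring
    rw [concat, if_neg hTt.not_ge, concat, if_neg hTt.not_ge, rootOp_self hA,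
      rootOp_eq_add_log_cumulativeWeight hB,
      cumulativeWeight_concat_of_le hT.le hTt.le ht.2 hpi hqi hA hB, hsplit,
      Real.log_mul (Real.exp_ne_zero _) (one_add_sub_one_mul_pos (Real.exp_pos _) hy).ne',
      Real.log_exp]
    ring

theorem stmt_6 (T S c : ℝ) (hT : 0 < T) (hS : 0 < S) (p q : ℝ → ℝ)
    (hp : ContinuousOn p (Set.Icc 0 T)) (hq : ContinuousOn q (Set.Icc 0 S))
    (hp0 : p 0 = 0) (hq0 : q 0 = 0)
    (c₁ c₂ : ℝ)
    (hc₁ : c₁ = Real.log (Real.exp (c + (p T + eps T p)) + Real.exp (eps S q)) -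
        Real.log (Real.exp (p T + eps T p) + Real.exp (eps S q)))
    (hc₂ : c₂ = c - c₁) :
    ∀ t ∈ Set.Icc (0:ℝ) (T + S),
      rootOp (T + S) c (concat T p q) t =
        concat T (rootOp T c₁ p) (rootOp S c₂ q) t :=
  stmt_6_general T S c hT hS p q hp hq c₁ c₂ hc₁ hc₂
end

section
/- Tropicalization of the root operator: for a continuous path π: [0,T] → ℝ with π(0)=0 and 0 < t < T, as h → 0+ the quantity h·log(e^{c/h} ∫₀ᵗ e^{-π(s)/h} ds + ∫ₜᵀ e^{-π(s)/h} ds) - h·log(∫₀ᵀ e^{-π(s)/h} ds) converges to inf_{0≤s≤T} π(s) - min(inf_{0≤s≤t} π(s) - c, inf_{t≤s≤T} π(s)). -/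
/-!
Laplace's principle: for `p` continuous on `[a, b]`, `h log ∫ₐᵇ e^{-p/h} → -inf p` as `h → 0⁺`,
because the integral lies between `(b - a) e^{-m/h}` and `(v - u) e^{-M/h}` for any subinterval
`[u, v]` on which `p < M`. Moreover `h log (X + Y)` lies between `max (h log X) (h log Y)` and that
plus `h log 2`, so `h log` turns sums into maxima in the limit. Applying both to the two pieces of
the numerator and to the denominator gives the limit `max (c - inf₀ᵗ p) (-infₜᵀ p) + inf₀ᵀ p`.
-/

open Filter MeasureTheory Set Topology Real

lemma tendsto_mul_log_const (K : ℝ) : Tendsto (fun h : ℝ => h * log K) (𝓝[>] 0) (𝓝 0) := by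
  simpa using ((continuous_mul_const (log K)).tendsto 0).mono_left nhdsWithin_le_nhds

lemma mul_log_exp_div_mul {h A : ℝ} (c : ℝ) (hh : h ≠ 0) (hA : 0 < A) :
    h * log (exp (c / h) * A) = c + h * log A := by
  rw [log_mul (exp_ne_zero _) hA.ne', log_exp, mul_add, mul_div_cancel₀ c hh]

lemma max_mul_log_le_mul_log_add {h x y : ℝ} (hh : 0 ≤ h) (hx : 0 < x) (hy : 0 < y) :
    max (h * log x) (h * log y) ≤ h * log (x + y) :=
  max_le (mul_le_mul_of_nonneg_left (log_le_log hx (by linarith)) hh)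
    (mul_le_mul_of_nonneg_left (log_le_log hy (by linarith)) hh)

lemma mul_log_add_le {h x y : ℝ} (hh : 0 ≤ h) (hx : 0 < x) (hy : 0 < y) :
    h * log (x + y) ≤ max (h * log x) (h * log y) + h * log 2 := by
  have hxy : x + y ≤ 2 * max x y := by linarith [le_max_left x y, le_max_right x y]
  have hlog : log (x + y) ≤ max (log x) (log y) + log 2 := by
    calc log (x + y) ≤ log (2 * max x y) := log_le_log (by linarith) hxy
      _ = log (max x y) + log 2 := by rw [log_mul two_ne_zero (by positivity), add_comm]
      _ = max (log x) (log y) + log 2 := by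
        rw [strictMonoOn_log.monotoneOn.map_max hx hy]
  calc h * log (x + y) ≤ h * (max (log x) (log y) + log 2) := mul_le_mul_of_nonneg_left hlog hh
    _ = max (h * log x) (h * log y) + h * log 2 := by rw [mul_add, mul_max_of_nonneg _ _ hh]

lemma tendsto_mul_log_add {X Y : ℝ → ℝ} {α β : ℝ} (hX : ∀ h, 0 < X h) (hY : ∀ h, 0 < Y h)
    (hXα : Tendsto (fun h => h * log (X h)) (𝓝[>] 0) (𝓝 α))
    (hYβ : Tendsto (fun h => h * log (Y h)) (𝓝[>] 0) (𝓝 β)) :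
    Tendsto (fun h => h * log (X h + Y h)) (𝓝[>] 0) (𝓝 (max α β)) := by
  have hmax := hXα.max hYβ
  have hpos : ∀ᶠ h : ℝ in 𝓝[>] 0, 0 ≤ h := eventually_mem_nhdsWithin.mono fun _ hh => le_of_lt hh
  refine tendsto_of_tendsto_of_tendsto_of_le_of_le' hmax
    (by simpa using hmax.add (tendsto_mul_log_const 2)) ?_ ?_
  · exact hpos.mono fun h hh => max_mul_log_le_mul_log_add hh (hX h) (hY h)
  · exact hpos.mono fun h hh => mul_log_add_le hh (hX h) (hY h)

section Laplace

variable {p : ℝ → ℝ} {a b : ℝ}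

lemma intervalIntegrable_exp_neg_div (hab : a ≤ b) (hp : ContinuousOn p (Icc a b)) (h : ℝ) :
    IntervalIntegrable (fun s => exp (-p s / h)) volume a b :=
  ContinuousOn.intervalIntegrable (by rw [uIcc_of_le hab]; fun_prop)

lemma integral_exp_neg_div_pos (hab : a < b) (hp : ContinuousOn p (Icc a b)) (h : ℝ) :
    0 < ∫ s in a..b, exp (-p s / h) :=
  intervalIntegral.intervalIntegral_pos_of_pos_on (intervalIntegrable_exp_neg_div hab.le hp h)
    (fun _ _ => exp_pos _) hab

lemma mul_log_integral_exp_neg_div_le (hab : a < b) (hp : ContinuousOn p (Icc a b)) {m h : ℝ}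
    (hm : ∀ s ∈ Icc a b, m ≤ p s) (hh : 0 < h) :
    h * log (∫ s in a..b, exp (-p s / h)) ≤ -m + h * log (b - a) := by
  have hle : ∫ s in a..b, exp (-p s / h) ≤ exp (-m / h) * (b - a) := by
    simpa [mul_comm] using intervalIntegral.integral_mono_on hab.le
      (intervalIntegrable_exp_neg_div hab.le hp h) intervalIntegrable_const
      fun s hs => exp_le_exp.2 (by gcongr; exact hm s hs)
  rw [← mul_log_exp_div_mul (-m) hh.ne' (sub_pos.2 hab)]
  exact mul_le_mul_of_nonneg_left (log_le_log (integral_exp_neg_div_pos hab hp h) hle) hh.le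

lemma le_mul_log_integral_exp_neg_div (hab : a ≤ b) (hp : ContinuousOn p (Icc a b)) {u v M h : ℝ}
    (huv : u < v) (hsub : Icc u v ⊆ Icc a b) (hM : ∀ s ∈ Icc u v, p s ≤ M) (hh : 0 < h) :
    -M + h * log (v - u) ≤ h * log (∫ s in a..b, exp (-p s / h)) := by
  have hint := intervalIntegrable_exp_neg_div hab hp h
  have hle : exp (-M / h) * (v - u) ≤ ∫ s in a..b, exp (-p s / h) :=
    calc exp (-M / h) * (v - u) ≤ ∫ s in u..v, exp (-p s / h) := by
          simpa [mul_comm] using intervalIntegral.integral_mono_on huv.le intervalIntegrable_const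
            (hint.mono_set (by rwa [uIcc_of_le huv.le, uIcc_of_le hab]))
            fun s hs => exp_le_exp.2 (by gcongr; exact hM s hs)
      _ ≤ ∫ s in a..b, exp (-p s / h) :=
          intervalIntegral.integral_mono_interval (hsub ⟨le_rfl, huv.le⟩).1 huv.le
            (hsub ⟨huv.le, le_rfl⟩).2 (Eventually.of_forall fun _ => (exp_pos _).le) hint
  rw [← mul_log_exp_div_mul (-M) hh.ne' (sub_pos.2 huv)]
  exact mul_le_mul_of_nonneg_left (log_le_log (by positivity) hle) hh.le

lemma exists_Icc_subset_forall_le (hab : a < b) (hp : ContinuousOn p (Icc a b)) {s₀ M : ℝ}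
    (hs₀ : s₀ ∈ Icc a b) (hM : p s₀ < M) :
    ∃ u v, u < v ∧ Icc u v ⊆ Icc a b ∧ ∀ s ∈ Icc u v, p s ≤ M := by
  -- first move to an interior point `s₁`, where `p` is continuous in the plain sense
  have : (𝓝[Ioo a b] s₀).NeBot := mem_closure_iff_nhdsWithin_neBot.1 (by rwa [closure_Ioo hab.ne])
  obtain ⟨s₁, hs₁, hps₁⟩ := (eventually_mem_nhdsWithin.and
    (((hp s₀ hs₀).mono Ioo_subset_Icc_self).eventually (gt_mem_nhds hM))).exists
  have hIcc : Icc a b ∈ 𝓝 s₁ := Icc_mem_nhds hs₁.1 hs₁.2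
  have hcont : ContinuousAt p s₁ := hp.continuousAt hIcc
  obtain ⟨ε, hε, hball⟩ := (nhds_basis_Icc_pos s₁).mem_iff.1
    (inter_mem hIcc (hcont.eventually (gt_mem_nhds hps₁)))
  exact ⟨s₁ - ε, s₁ + ε, by linarith, fun s hs => (hball hs).1, fun s hs => (hball hs).2.le⟩

theorem tendsto_mul_log_integral_exp_neg_div (hab : a < b) (hp : ContinuousOn p (Icc a b)) :
    Tendsto (fun h => h * log (∫ s in a..b, exp (-p s / h))) (𝓝[>] 0)
      (𝓝 (-sInf (p '' Icc a b))) := by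
  obtain ⟨s₀, hs₀, hmin⟩ := isCompact_Icc.exists_isMinOn (nonempty_Icc.2 hab.le) hp
  rw [IsLeast.csInf_eq ⟨mem_image_of_mem p hs₀, forall_mem_image.2 fun s hs => hmin hs⟩]
  refine tendsto_order.2 ⟨fun x hx => ?_, fun x hx => ?_⟩
  · obtain ⟨u, v, huv, hsub, hM⟩ :=
      exists_Icc_subset_forall_le hab hp hs₀ (show p s₀ < (p s₀ - x) / 2 by linarith)
    have hlim := (tendsto_mul_log_const (v - u)).const_add (-((p s₀ - x) / 2))
    filter_upwards [hlim.eventually (lt_mem_nhds (show x < _ + 0 by linarith)), self_mem_nhdsWithin]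
      with h hlt hh
    exact hlt.trans_le (le_mul_log_integral_exp_neg_div hab.le hp huv hsub hM hh)
  · have hlim := (tendsto_mul_log_const (b - a)).const_add (-p s₀)
    filter_upwards [hlim.eventually (gt_mem_nhds (show _ + 0 < x by linarith)), self_mem_nhdsWithin]
      with h hlt hh
    exact (mul_log_integral_exp_neg_div_le hab hp (fun s hs => hmin hs) hh).trans_lt hlt

end Laplace

theorem stmt_10_general (T t c : ℝ) (ht : 0 < t) (htT : t < T) (p : ℝ → ℝ)
    (hp : ContinuousOn p (Set.Icc 0 T)) :
    Tendsto (fun h : ℝ =>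
        h * Real.log (Real.exp (c / h) * (∫ s in (0:ℝ)..t, Real.exp (-p s / h)) +
            ∫ s in t..T, Real.exp (-p s / h)) -
          h * Real.log (∫ s in (0:ℝ)..T, Real.exp (-p s / h)))
      (nhdsWithin 0 (Set.Ioi 0))
      (nhds (sInf (p '' Set.Icc 0 T) -
        min (sInf (p '' Set.Icc 0 t) - c) (sInf (p '' Set.Icc t T)))) := by
  have hp₁ : ContinuousOn p (Icc 0 t) := hp.mono (Icc_subset_Icc le_rfl htT.le)
  have hp₂ : ContinuousOn p (Icc t T) := hp.mono (Icc_subset_Icc ht.le le_rfl)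
  have hfirst : Tendsto (fun h => h * log (exp (c / h) * ∫ s in (0:ℝ)..t, exp (-p s / h)))
      (𝓝[>] 0) (𝓝 (c + -sInf (p '' Icc 0 t))) := by
    refine ((tendsto_mul_log_integral_exp_neg_div ht hp₁).const_add c).congr' ?_
    filter_upwards [self_mem_nhdsWithin] with h (hh : 0 < h)
    exact (mul_log_exp_div_mul c hh.ne' (integral_exp_neg_div_pos ht hp₁ h)).symm
  have hnum := tendsto_mul_log_add
    (fun h => mul_pos (exp_pos _) (integral_exp_neg_div_pos ht hp₁ h))
    (integral_exp_neg_div_pos htT hp₂) hfirst (tendsto_mul_log_integral_exp_neg_div htT hp₂)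
  convert hnum.sub (tendsto_mul_log_integral_exp_neg_div (ht.trans htT) hp) using 2
  rw [sub_eq_add_neg (sInf _), ← max_neg_neg, neg_sub, sub_eq_add_neg c]
  ring

theorem stmt_10 (T t c : ℝ) (ht : 0 < t) (htT : t < T) (p : ℝ → ℝ)
    (hp : ContinuousOn p (Set.Icc 0 T)) (hp0 : p 0 = 0) :
    Tendsto (fun h : ℝ =>
        h * Real.log (Real.exp (c / h) * (∫ s in (0:ℝ)..t, Real.exp (-p s / h)) +
            ∫ s in t..T, Real.exp (-p s / h)) -
          h * Real.log (∫ s in (0:ℝ)..T, Real.exp (-p s / h)))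
      (nhdsWithin 0 (Set.Ioi 0))
      (nhds (sInf (p '' Set.Icc 0 T) -
        min (sInf (p '' Set.Icc 0 t) - c) (sInf (p '' Set.Icc t T)))) :=
  stmt_10_general T t c ht htT p hp
end
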